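/- Let (A,m) be a Noetherian local ring, I = (a_1,…,a_ℓ) an ideal of A, a ∈ A, R = A[It] the Rees algebra, and let R ⊆ S be an integral extension of ℕ-graded rings (S is ℕ-graded, R_n ⊆ S_n for all n, and S is integral over R). Then the image of a lies in I·S_(q) for every q ∈ Proj(S) with q ∩ A = m if and only if the image of a lies in I·S_(a_i t) for each i = 1,…,ℓ. -/

import Mathlib

/-!
Write `R₊ = (It)` for the irrelevant ideal of `R = A[It]`. Since `S` is integral over `R`, every
homogeneous element of `S` of positive degree lies in the radical of `R₊S`, so each point `q` of
`Proj S` misses some `aᵢt`, and `a ∈ I·S_(aᵢt)` gives `a ∈ I·S_(q)`.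

Conversely, if `a ∉ I·S_(aᵢt)`, pick a homogeneous prime `P ⊇ (IS : a)` with `aᵢt ∉ P`. Then `R₊`
is not contained in the radical of `(P ∩ R) + mR`: otherwise some power `R₊ᴹ` is, and in degree `M`
this reads `Iᴹtᴹ ⊆ (P ∩ R) + m·Iᴹtᴹ`, so `Iᴹtᴹ ⊆ P` by Nakayama and `(aᵢt)ᴹ ∈ P`. Going up from a prime
of `R` over `(P ∩ R) + mR` that avoids `R₊`, and taking the homogeneous core, gives a point
`q ⊇ P` of `Proj S` over `m` at which `a ∉ I·S_(q)`.
-/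

open Polynomial IsLocalRing

theorem Ideal.IsHomogeneous.colon_singleton {ι R σ : Type*} [CommSemiring R] [SetLike σ R]
    [AddSubmonoidClass σ R] [DecidableEq ι] [AddRightCancelMonoid ι] {𝒜 : ι → σ} [GradedRing 𝒜]
    {J : Ideal R} (hJ : J.IsHomogeneous 𝒜) {x : R} {i : ι} (hx : x ∈ 𝒜 i) :
    (J.colon {x}).IsHomogeneous 𝒜 := by
  intro d s hs
  rw [Submodule.mem_colon_singleton, smul_eq_mul] at hs ⊢
  rw [← DirectSum.coe_decompose_mul_add_of_right_mem 𝒜 hx]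
  exact hJ _ hs

theorem Ideal.isHomogeneous_map_algebraMap {ι A S : Type*} [CommSemiring A] [Semiring S]
    [Algebra A S] [DecidableEq ι] [AddMonoid ι] (𝒜 : ι → Submodule A S) [GradedAlgebra 𝒜]
    (I : Ideal A) : (I.map (algebraMap A S)).IsHomogeneous 𝒜 :=
  Ideal.homogeneous_span 𝒜 _ (by rintro _ ⟨a, -, rfl⟩; exact ⟨0, SetLike.algebraMap_mem_graded 𝒜 a⟩)

namespace reesAlgebra

variable {A : Type*} [CommRing A] {I : Ideal A}

noncomputable def monomialₗ (n : ℕ) : ↥(I ^ n) →ₗ[A] reesAlgebra I where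
  toFun c := ⟨monomial n (c : A), monomial_mem.mpr c.2⟩
  map_add' c d := Subtype.ext (by simp)
  map_smul' a c := Subtype.ext (by simp [smul_monomial])

noncomputable def coeffₗ (n : ℕ) : reesAlgebra I →ₗ[A] ↥(I ^ n) where
  toFun r := ⟨(r : A[X]).coeff n, (mem_reesAlgebra_iff I _).mp r.2 n⟩
  map_add' r s := Subtype.ext (by simp)
  map_smul' a r := Subtype.ext (by simp)

@[simp]
theorem coe_monomialₗ (n : ℕ) (c : ↥(I ^ n)) : (monomialₗ n c : A[X]) = monomial n (c : A) := rfl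

@[simp]
theorem coe_coeffₗ (n : ℕ) (r : reesAlgebra I) : (coeffₗ n r : A) = (r : A[X]).coeff n := rfl

@[simp]
theorem coeffₗ_monomialₗ (n : ℕ) (c : ↥(I ^ n)) : coeffₗ n (monomialₗ n c) = c :=
  Subtype.ext (by simp)

theorem sum_monomialₗ_coeffₗ (r : reesAlgebra I) :
    ∑ k ∈ (r : A[X]).support, monomialₗ k (coeffₗ k r) = r :=
  Subtype.ext (by simpa using (r : A[X]).as_sum_support.symm)

theorem monomialₗ_mul {m n : ℕ} {c d : A} (hc : c ∈ I ^ m) (hd : d ∈ I ^ n) :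
    monomialₗ m ⟨c, hc⟩ * monomialₗ n ⟨d, hd⟩ =
      monomialₗ (m + n) ⟨c * d, pow_add I m n ▸ Ideal.mul_mem_mul hc hd⟩ :=
  Subtype.ext (by simp [monomial_mul_monomial])

variable (I) in
noncomputable def irrelevant : Ideal (reesAlgebra I) := Ideal.span (Set.range (monomialₗ 1))

theorem monomialₗ_mem_irrelevant_pow (n : ℕ) (c : ↥(I ^ n)) :
    monomialₗ n c ∈ irrelevant I ^ n := by
  induction n with
  | zero => simp
  | succ n ih =>
    obtain ⟨c, hc⟩ := c
    have hc' : c ∈ I ^ n * I ^ 1 := by rwa [← pow_add]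
    induction hc' using Submodule.mul_induction_on' with
    | mem_mul_mem x hx y hy =>
      rw [← monomialₗ_mul hx hy, pow_succ]
      exact Ideal.mul_mem_mul (ih _) (Ideal.subset_span ⟨_, rfl⟩)
    | add x hx y hy ihx ihy =>
      rw [← pow_add] at hx hy
      have := add_mem (ihx hx) (ihy hy)
      rwa [← map_add] at this

theorem monomialₗ_one_pow (c : ↥(I ^ 1)) (n : ℕ) :
    monomialₗ 1 c ^ n = monomialₗ n ⟨(c : A) ^ n, Ideal.pow_mem_pow (by simpa using c.2) n⟩ :=
  Subtype.ext (by simp [monomial_pow])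

theorem monomialₗ_mem_irrelevant {n : ℕ} (hn : n ≠ 0) (c : ↥(I ^ n)) :
    monomialₗ n c ∈ irrelevant I :=
  Ideal.pow_le_self hn (monomialₗ_mem_irrelevant_pow n c)

theorem irrelevant_eq_span {ι : Type*} [Fintype ι] {g : ι → ↥(I ^ 1)}
    (hI : I = Ideal.span (Set.range fun j => (g j : A))) :
    irrelevant I = Ideal.span (Set.range fun j => monomialₗ 1 (g j)) := by
  refine le_antisymm (Ideal.span_le.mpr ?_) (Ideal.span_mono (Set.range_comp_subset_range g _))
  rintro _ ⟨c, rfl⟩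
  obtain ⟨a, ha⟩ := (Submodule.mem_span_range_iff_exists_fun A).mp
    (show (c : A) ∈ Ideal.span _ by rw [← hI]; simpa using c.2)
  have hc : c = ∑ j, a j • g j := Subtype.ext (by rw [← ha]; simp)
  rw [hc, map_sum]
  refine Ideal.sum_mem _ fun j _ => ?_
  rw [map_smul]
  exact Submodule.smul_of_tower_mem _ _ (Ideal.subset_span ⟨j, rfl⟩)

theorem irrelevant_fg (hI : I.FG) : (irrelevant I).FG := by
  obtain ⟨s, hs⟩ := hI
  let g : s → ↥(I ^ 1) := fun x => ⟨x, by rw [pow_one, ← hs]; exact Ideal.subset_span x.2⟩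
  rw [irrelevant_eq_span (g := g) (by simp [g, ← hs])]
  exact Submodule.fg_span (Set.finite_range _)

section Graded

variable {S : Type*} [CommRing S] [Algebra A S] {𝒜 : ℕ → Submodule A S} [GradedAlgebra 𝒜]
  {Φ : reesAlgebra I →ₐ[A] S}

theorem coe_decompose_map (hΦ : ∀ n (c : ↥(I ^ n)), Φ (monomialₗ n c) ∈ 𝒜 n)
    (r : reesAlgebra I) (d : ℕ) :
    (DirectSum.decompose 𝒜 (Φ r) d : S) = Φ (monomialₗ d (coeffₗ d r)) := by
  classical
  conv_lhs => rw [← sum_monomialₗ_coeffₗ r, map_sum, DirectSum.decompose_sum,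
    DFinsupp.finsetSum_apply, AddSubmonoidClass.coe_finsetSum]
  rw [Finset.sum_eq_single d (fun k _ hk => DirectSum.decompose_of_mem_ne 𝒜 (hΦ k _) hk),
    DirectSum.decompose_of_mem_same 𝒜 (hΦ d _)]
  intro hd
  rw [Polynomial.notMem_support_iff] at hd
  simp [show coeffₗ d r = 0 from Subtype.ext hd]

theorem mem_radical_map_irrelevant (hΦ : ∀ n (c : ↥(I ^ n)), Φ (monomialₗ n c) ∈ 𝒜 n)
    (hint : (Φ : reesAlgebra I →+* S).IsIntegral) {n : ℕ} (hn : 0 < n) {z : S} (hz : z ∈ 𝒜 n) :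
    z ∈ (Ideal.map Φ (irrelevant I)).radical := by
  obtain ⟨p, hp, hpz⟩ := hint z
  set e := p.natDegree
  have hze : z ^ e = -∑ j ∈ Finset.range e, Φ (p.coeff j) * z ^ j := by
    rw [hp.as_sum] at hpz
    simpa [eval₂_finsetSum, add_eq_zero_iff_eq_neg] using hpz
  refine ⟨e, ?_⟩
  rw [← DirectSum.decompose_of_mem_same 𝒜 (SetLike.pow_mem_graded e hz), ← GradedRing.proj_apply,
    hze, map_neg, map_sum]
  refine neg_mem (Ideal.sum_mem _ fun j hj => ?_)
  have hje : j < e := Finset.mem_range.mp hj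
  have hdeg : e • n = (e - j) * n + j • n := by
    rw [smul_eq_mul, smul_eq_mul, ← add_mul, Nat.sub_add_cancel hje.le]
  rw [GradedRing.proj_apply, hdeg,
    DirectSum.coe_decompose_mul_add_of_right_mem 𝒜 (SetLike.pow_mem_graded j hz),
    coe_decompose_map hΦ]
  exact Ideal.mul_mem_right _ _ (Ideal.mem_map_of_mem _
    (monomialₗ_mem_irrelevant (Nat.mul_ne_zero (Nat.sub_ne_zero_of_lt hje) hn.ne') _))

theorem map_monomialₗ_mem_of_forall_mem_sup [IsLocalRing A]
    (hΦ : ∀ n (c : ↥(I ^ n)), Φ (monomialₗ n c) ∈ 𝒜 n) (hI : I.FG) {P : Ideal S}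
    (hP : P.IsHomogeneous 𝒜) {n : ℕ}
    (h : ∀ c : ↥(I ^ n),
      monomialₗ n c ∈ P.comap Φ ⊔ (maximalIdeal A).map (algebraMap A (reesAlgebra I)))
    (c : ↥(I ^ n)) : Φ (monomialₗ n c) ∈ P := by
  let N : Submodule A ↥(I ^ n) := (P.restrictScalars A).comap (Φ.toLinearMap ∘ₗ monomialₗ n)
  suffices ⊤ ≤ N from this Submodule.mem_top
  refine Submodule.le_of_le_smul_of_le_jacobson_bot ((Submodule.fg_top _).mpr hI.pow)
    (maximalIdeal_le_jacobson _) ?_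
  rintro c -
  obtain ⟨ρ, hρ, w, hw, hsum⟩ := Submodule.mem_sup.mp (h c)
  have hc : c = coeffₗ n ρ + coeffₗ n w := by rw [← map_add, hsum, coeffₗ_monomialₗ]
  rw [hc]
  refine Submodule.add_mem_sup ?_ ?_
  · show Φ (monomialₗ n (coeffₗ n ρ)) ∈ P
    rw [← coe_decompose_map hΦ]
    exact hP n hρ
  · have hw' : w ∈ (maximalIdeal A • ⊤ : Submodule A (reesAlgebra I)) := by
      rw [Ideal.smul_top_eq_map]; exact hw
    have := Submodule.mem_map_of_mem (f := coeffₗ n) hw'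
    rw [Submodule.map_smul''] at this
    exact Submodule.smul_mono le_rfl le_top this

theorem not_irrelevant_le_radical [IsLocalRing A]
    (hΦ : ∀ n (c : ↥(I ^ n)), Φ (monomialₗ n c) ∈ 𝒜 n) (hI : I.FG) {P : Ideal S} [P.IsPrime]
    (hP : P.IsHomogeneous 𝒜) {c : ↥(I ^ 1)} (hc : Φ (monomialₗ 1 c) ∉ P) :
    ¬ irrelevant I ≤
      (P.comap Φ ⊔ (maximalIdeal A).map (algebraMap A (reesAlgebra I))).radical := by
  intro hle
  obtain ⟨M, hM⟩ := Ideal.exists_pow_le_of_le_radical_of_fg hle (irrelevant_fg hI)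
  have := map_monomialₗ_mem_of_forall_mem_sup hΦ hI hP
    (fun x => hM (monomialₗ_mem_irrelevant_pow M x))
    ⟨(c : A) ^ M, Ideal.pow_mem_pow (by simpa using c.2) M⟩
  rw [← monomialₗ_one_pow, map_pow] at this
  exact hc (Ideal.IsPrime.mem_of_pow_mem ‹_› M this)

theorem exists_isPrime_isHomogeneous_comap_eq_maximalIdeal [IsLocalRing A]
    (hΦ : ∀ n (c : ↥(I ^ n)), Φ (monomialₗ n c) ∈ 𝒜 n)
    (hint : (Φ : reesAlgebra I →+* S).IsIntegral) (hI : I.FG) {P : Ideal S} [P.IsPrime]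
    (hP : P.IsHomogeneous 𝒜) {c : ↥(I ^ 1)} (hc : Φ (monomialₗ 1 c) ∉ P) :
    ∃ q : Ideal S, q.IsPrime ∧ q.IsHomogeneous 𝒜 ∧ P ≤ q ∧
      q.comap (algebraMap A S) = maximalIdeal A ∧ ∃ x : ↥(I ^ 1), Φ (monomialₗ 1 x) ∉ q := by
  obtain ⟨P₂, hPP₂, hmP₂, hP₂, hKP₂⟩ : ∃ P₂ : Ideal (reesAlgebra I), P.comap Φ ≤ P₂ ∧
      (maximalIdeal A).map (algebraMap A (reesAlgebra I)) ≤ P₂ ∧ P₂.IsPrime ∧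
        ¬ irrelevant I ≤ P₂ := by
    simpa [Ideal.radical_eq_sInf, le_sInf_iff] using not_irrelevant_le_radical hΦ hI hP hc
  obtain ⟨x, hx⟩ : ∃ x, monomialₗ 1 x ∉ P₂ := by
    simpa [irrelevant, Ideal.span_le, Set.range_subset_iff] using hKP₂
  let := (Φ : reesAlgebra I →+* S).toAlgebra
  have : Algebra.IsIntegral (reesAlgebra I) S := ⟨hint⟩
  obtain ⟨Q, hPQ, hQ, hQP₂⟩ :=
    Ideal.exists_ideal_over_prime_of_isIntegral P₂ P hPP₂
  refine ⟨(Q.homogeneousCore 𝒜).toIdeal, hQ.homogeneousCore,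
    (Q.homogeneousCore 𝒜).isHomogeneous, ?_, ?_, x, ?_⟩
  · exact hP.toIdeal_homogeneousCore_eq_self ▸ Ideal.homogeneousCore_mono 𝒜 hPQ
  · refine le_antisymm (le_maximalIdeal (hQ.homogeneousCore.comap _).ne_top) fun u hu => ?_
    refine Ideal.mem_homogeneousCore_of_homogeneous_of_mem
      ⟨0, SetLike.algebraMap_mem_graded 𝒜 u⟩ ?_
    have hu' : algebraMap A (reesAlgebra I) u ∈ Q.comap (algebraMap (reesAlgebra I) S) :=
      hQP₂ ▸ hmP₂ (Ideal.mem_map_of_mem _ hu)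
    rwa [← Φ.commutes u]
  · exact fun h => hx (hQP₂ ▸ Ideal.toIdeal_homogeneousCore_le 𝒜 Q h)

theorem map_monomialₗ_mem_radical [IsLocalRing A]
    (hΦ : ∀ n (c : ↥(I ^ n)), Φ (monomialₗ n c) ∈ 𝒜 n)
    (hint : (Φ : reesAlgebra I →+* S).IsIntegral) (hI : I.FG) {J : Ideal S}
    (hJ : J.IsHomogeneous 𝒜)
    (H : ∀ q : Ideal S, q.IsPrime → q.IsHomogeneous 𝒜 → (∃ x : ↥(I ^ 1), Φ (monomialₗ 1 x) ∉ q) →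
      q.comap (algebraMap A S) = maximalIdeal A → ¬ J ≤ q)
    (c : ↥(I ^ 1)) : Φ (monomialₗ 1 c) ∈ J.radical := by
  rw [hJ.radical_eq, Submodule.mem_sInf]
  rintro P ⟨hP, hJP, hPprime⟩
  by_contra hcP
  obtain ⟨q, hq, hqhom, hPq, hqm, hx⟩ :=
    exists_isPrime_isHomogeneous_comap_eq_maximalIdeal hΦ hint hI hP hcP
  exact H q hq hqhom hx hqm (hJP.trans hPq)

end Graded

end reesAlgebra

open reesAlgebra in
theorem mem_IS_proj_iff_mem_IS_affine {A : Type*} [CommRing A]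
    [IsLocalRing A] (I : Ideal A) {ℓ : ℕ} (g : Fin ℓ → A) (hg : ∀ i, g i ∈ I)
    (hI : I = Ideal.span (Set.range g)) (a : A)
    {S : Type*} [CommRing S] [Algebra A S] (𝒜 : ℕ → Submodule A S) [GradedAlgebra 𝒜]
    (Φ : ↥(reesAlgebra I) →ₐ[A] S)
    (hΦgr : ∀ (n : ℕ) (x : A) (hx : x ∈ I ^ n),
      Φ ⟨Polynomial.monomial n x, reesAlgebra.monomial_mem.mpr hx⟩ ∈ 𝒜 n)
    (hSint : ∀ s : S, ∃ p : Polynomial ↥(reesAlgebra I), p.Monic ∧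
      Polynomial.eval₂ (Φ : ↥(reesAlgebra I) →+* S) s p = 0) :
    (∀ q : Ideal S, q.IsPrime → Ideal.IsHomogeneous 𝒜 q →
      (∃ n : ℕ, 0 < n ∧ ∃ s ∈ 𝒜 n, s ∉ q) →
      Ideal.comap (algebraMap A S) q = IsLocalRing.maximalIdeal A →
      ∃ (n : ℕ) (s : S), s ∈ 𝒜 n ∧ s ∉ q ∧
        algebraMap A S a * s ∈ Ideal.map (algebraMap A S) I) ↔
    (∀ i : Fin ℓ, ∃ N : ℕ,
      algebraMap A S a *
        (Φ ⟨Polynomial.monomial 1 (g i),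
          reesAlgebra.monomial_mem.mpr (by simpa using hg i)⟩) ^ N
        ∈ Ideal.map (algebraMap A S) I) := by
  have hΦ : ∀ n (c : ↥(I ^ n)), Φ (monomialₗ n c) ∈ 𝒜 n := fun n c => hΦgr n c c.2
  let t : Fin ℓ → ↥(I ^ 1) := fun i => ⟨g i, by simpa using hg i⟩
  constructor
  · intro H i
    let J := (Ideal.map (algebraMap A S) I).colon {algebraMap A S a}
    have hJ : J.IsHomogeneous 𝒜 := (Ideal.isHomogeneous_map_algebraMap 𝒜 I).colon_singleton
      (SetLike.algebraMap_mem_graded 𝒜 a)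
    obtain ⟨N, hN⟩ := map_monomialₗ_mem_radical hΦ hSint
      (hI ▸ Submodule.fg_span (Set.finite_range g)) hJ (fun q hq hqhom ⟨x, hx⟩ hqm hJq => by
        obtain ⟨n, s, -, hsq, has⟩ := H q hq hqhom ⟨1, one_pos, _, hΦ 1 x, hx⟩ hqm
        exact hsq (hJq (by simpa [J, mul_comm] using has))) (t i)
    rw [Submodule.mem_colon_singleton, smul_eq_mul, mul_comm] at hN
    exact ⟨N, hN⟩
  · rintro H q hq - ⟨n, hn, s, hs, hsq⟩ -
    obtain ⟨i, hi⟩ : ∃ i, Φ (monomialₗ 1 (t i)) ∉ q := by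
      by_contra! hall
      refine hsq (hq.radical_le_iff.mpr ?_ (mem_radical_map_irrelevant hΦ hSint hn hs))
      rw [irrelevant_eq_span (g := t) hI, Ideal.map_span, Ideal.span_le]
      rintro _ ⟨_, ⟨i, rfl⟩, rfl⟩
      exact hall i
    obtain ⟨N, hN⟩ := H i
    exact ⟨N, _, by simpa using SetLike.pow_mem_graded N (hΦ 1 (t i)),
      fun h => hi (hq.mem_of_pow_mem N h), hN⟩
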